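/- arXiv:0804.0794 — 2 statements merged into one kernel-verified Lean document; each statement's English description precedes it below -/
import Mathlib

section
/- Let R be a commutative ring and consider the ring of formal pseudo-difference operators Σ_{s≤1} a_s T^s with a_s : ℤ → R and T the shift operator (T f)(n) = f(n+1), with multiplication T∘a = (a∘shift)∘T. For a pseudo-difference operator D = Σ_{s=−∞}^{N} a_s T^s define res_T D = a_0, the coefficient of T^0. Prove: for pseudo-difference operators D₁, D₂ of finite order, res_T(D₁D₂ − D₂D₁) is a total difference, i.e., there exists g with res_T [D₁,D₂] = (Δ g)(n) := g(n+1) − g(n). -/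
/-- The coefficient of `T^s` in the product of two pseudo-difference operators
`D₁ = Σ_{i ≤ N₁} a_i T^i` and `D₂ = Σ_{j ≤ N₂} b_j T^j` (with `T` the unit shift,
`T^i ∘ b = b(·+i) ∘ T^i`): `(D₁D₂)_s(n) = Σ_i a_i(n)·b_{s−i}(n+i)`, a finite sum since
`s − N₂ ≤ i ≤ N₁`. -/
noncomputable def pdoMulCoeff {R : Type*} [CommRing R] (N₁ N₂ : ℤ) (a b : ℤ → ℤ → R) (s n : ℤ) : R :=
  ∑ i ∈ Finset.Icc (s - N₂) N₁, a i n * b (s - i) (n + i)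

/-- For any `f : ℤ → R` and `i : ℤ`, the function `n ↦ f n - f (n - i)` is a
total difference. -/
lemma tele_diff {R : Type*} [CommRing R] (f : ℤ → R) (i : ℤ) :
    ∃ g : ℤ → R, ∀ n : ℤ, f n - f (n - i) = g (n + 1) - g n := by
  induction i using Int.induction_on with
  | zero => exact ⟨0, by simp⟩
  | succ k ih =>
      obtain ⟨g, hg⟩ := ih
      refine ⟨fun n => g n + f (n - k - 1), fun n => ?_⟩
      have h := hg n
      beta_reduce
      rw [show n + 1 - (k : ℤ) - 1 = n - k from by ring,
        show n - ((k : ℤ) + 1) = n - k - 1 from by ring]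
      linear_combination h
  | pred k ih =>
      obtain ⟨g, hg⟩ := ih
      refine ⟨fun n => g n - f (n + k), fun n => ?_⟩
      have h := hg n
      rw [show n - (-(k : ℤ)) = n + k from by ring] at h
      beta_reduce
      rw [show n - (-(k : ℤ) - 1) = n + k + 1 from by ring,
        show n + 1 + (k : ℤ) = n + k + 1 from by ring]
      linear_combination h

/-- for pseudo-difference operators `D₁, D₂` of finite order (coefficients
vanishing above `N₁`, resp. `N₂`), the residue `res_T [D₁, D₂]` (the `T^0`-coefficient of
the commutator) is a total difference: `res_T [D₁,D₂](n) = g(n+1) − g(n)` for some `g`. -/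
theorem stmt9 {R : Type*} [CommRing R] (a b : ℤ → ℤ → R) (N₁ N₂ : ℤ)
    (ha : ∀ s : ℤ, N₁ < s → ∀ n : ℤ, a s n = 0)
    (hb : ∀ s : ℤ, N₂ < s → ∀ n : ℤ, b s n = 0) :
    ∃ g : ℤ → R, ∀ n : ℤ,
      pdoMulCoeff N₁ N₂ a b 0 n - pdoMulCoeff N₂ N₁ b a 0 n = g (n + 1) - g n := by
  classical
  choose G hG using fun i : ℤ => tele_diff (fun n => a i n * b (-i) (n + i)) i
  refine ⟨fun n => ∑ i ∈ Finset.Icc (-N₂) N₁, G i n, fun n => ?_⟩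
  have hre : pdoMulCoeff N₂ N₁ b a 0 n
      = ∑ i ∈ Finset.Icc (-N₂) N₁, a i (n - i) * b (-i) (n - i + i) := by
    unfold pdoMulCoeff
    refine Finset.sum_equiv (Equiv.neg ℤ) (fun j => ?_) (fun j hj => ?_)
    · simp only [Finset.mem_Icc, Equiv.neg_apply]
      omega
    · simp only [Equiv.neg_apply, zero_sub, neg_neg, sub_neg_eq_add, sub_add_cancel]
      ring
  have hfi : pdoMulCoeff N₁ N₂ a b 0 n
      = ∑ i ∈ Finset.Icc (-N₂) N₁, a i n * b (-i) (n + i) := by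
    unfold pdoMulCoeff
    rw [zero_sub]
    refine Finset.sum_congr rfl (fun i _ => ?_)
    rw [zero_sub]
  rw [hfi, hre, ← Finset.sum_sub_distrib, ← Finset.sum_sub_distrib]
  refine Finset.sum_congr rfl (fun i _ => ?_)
  exact hG i n
end

section
/- Let u : ℤ × ℂ → ℂ (written u(n,t), smooth in t) and let L = T + Σ_{s=0}^{∞} w_s T^{−s} be a formal pseudo-difference operator in the shift T with t-dependent coefficients, satisfying [∂_t − T + u, L] = 0. Write L^m = L^m_+ + L^m_− where L^m_+ contains only strictly positive powers of T and L^m_− = F_m + F_m^1 T^{−1} + F_m^2 T^{−2} + O(T^{−3}). Then [∂_t − T + u, L^m_+] = (Δ F_m)·T where (Δ F_m)(n) = F_m(n+1) − F_m(n); moreover Δ F_m^1 = ∂_t F_m, and Δ F_m^2 = ∂_t F_m^1 + u·F_m^1 − F_m^1(·−1)·u(·−1) (with the appropriate shift convention). -/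
/-! The operator `M = ∂_t − T + u` acts on pseudo-difference operators as a derivation
`D ↦ [M, D]`, so `[M, L] = 0` propagates to `[M, L^m] = 0`. Since the shift `T` moves the
`T^0`-coefficient of `L^m` into the `T^1` slot, `[M, L^m_+]` is the positive part of `[M, L^m]`,
which vanishes, plus `(Δ F_m) T`; the other two identities are the `T^0`- and `T^{−1}`-coefficients
of `[M, L^m] = 0`.

On the truncated products `pdoMulCoeff` the Leibniz rule needs the leading coefficients to be
independent of `n` (for `L` and `L^m` they equal `1`): this is what cancels the boundary terms of
the telescoping sum produced by the shift. -/

namespace Stmt10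

/-- Coefficient of `T^s` in the product of two pseudo-difference operators with
`t`-dependent coefficients and order bounds `N₁`, `N₂`. -/
noncomputable def pdoMulCoeff (N₁ N₂ : ℤ) (a b : ℤ → ℤ → ℂ → ℂ) (s n : ℤ) (t : ℂ) : ℂ :=
  ∑ i ∈ Finset.Icc (s - N₂) N₁, a i n t * b (s - i) (n + i) t

/-- Coefficients of `L = T + Σ_{s≥0} w_s T^{−s}`. -/
noncomputable def Lcoeff (w : ℕ → ℤ → ℂ → ℂ) : ℤ → ℤ → ℂ → ℂ :=
  fun s n t => if s = 1 then 1 else if s ≤ 0 then w (-s).toNat n t else 0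

/-- Coefficients of `L^m` (`L` has order `1`, `L^m` has order `m`). -/
noncomputable def Lpow (w : ℕ → ℤ → ℂ → ℂ) : ℕ → ℤ → ℤ → ℂ → ℂ
  | 0 => fun s _ _ => if s = 0 then 1 else 0
  | m + 1 => pdoMulCoeff 1 (m : ℤ) (Lcoeff w) (Lpow w m)

/-- Coefficient of `T^s` in the commutator `[∂_t − T + u, D]` for a pseudo-difference
operator `D` with coefficients `a`. -/
noncomputable def bracketCoeff (u : ℤ → ℂ → ℂ) (a : ℤ → ℤ → ℂ → ℂ) (s n : ℤ) (t : ℂ) : ℂ :=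
  deriv (a s n) t - a (s - 1) (n + 1) t + a (s - 1) n t
    + u n t * a s n t - a s n t * u (n + s) t

/-- Strictly positive difference part `D_+` of a pseudo-difference operator. -/
noncomputable def posPart (a : ℤ → ℤ → ℂ → ℂ) : ℤ → ℤ → ℂ → ℂ :=
  fun s n t => if 1 ≤ s then a s n t else 0

open Finset

theorem sum_Icc_sub_eq_of_boundary {M : Type*} [AddCommGroup M] {L U : ℤ} (f g h : ℤ → M)
    (hU : f U = g U) (hL : g L = h L) :
    ∑ i ∈ Icc L U, (h i - f i)
      = ∑ i ∈ Icc L (U - 1), (g i - f i) + ∑ i ∈ Icc (L + 1) U, (h i - g i) := by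
  rcases lt_or_ge U L with hUL | hLU
  · rw [Icc_eq_empty_of_lt hUL, Icc_eq_empty_of_lt (by omega), Icc_eq_empty_of_lt (by omega)]
    simp
  calc ∑ i ∈ Icc L U, (h i - f i)
      = ∑ i ∈ Icc L U, (g i - f i) + ∑ i ∈ Icc L U, (h i - g i) := by
        rw [← sum_add_distrib]; simp only [sub_add_sub_cancel']
    _ = _ := by
        rw [← insert_Icc_sub_one_right_eq_Icc hLU, sum_insert (by simp),
          insert_Icc_sub_one_right_eq_Icc hLU, ← insert_Icc_add_one_left_eq_Icc hLU,
          sum_insert (by simp), hU, hL]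
        abel

section Product

variable {N₁ N₂ : ℤ} {a b : ℤ → ℤ → ℂ → ℂ}

theorem deriv_pdoMulCoeff (ha : ∀ i n, Differentiable ℂ (a i n))
    (hb : ∀ j n, Differentiable ℂ (b j n)) (s n : ℤ) (t : ℂ) :
    deriv (pdoMulCoeff N₁ N₂ a b s n) t
      = ∑ i ∈ Icc (s - N₂) N₁,
          (deriv (a i n) t * b (s - i) (n + i) t + a i n t * deriv (b (s - i) (n + i)) t) :=
  (HasDerivAt.fun_sum fun i _ =>
    (ha i n).differentiableAt.hasDerivAt.mul
      (hb (s - i) (n + i)).differentiableAt.hasDerivAt).deriv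

theorem pdoMulCoeff_sub_shift (ha : ∀ n t, a N₁ (n + 1) t = a N₁ n t)
    (hb : ∀ n t, b N₂ (n + 1) t = b N₂ n t) (s n : ℤ) (t : ℂ) :
    pdoMulCoeff N₁ N₂ a b (s - 1) n t - pdoMulCoeff N₁ N₂ a b (s - 1) (n + 1) t
      = ∑ i ∈ Icc (s - N₂) N₁,
          ((a (i - 1) n t - a (i - 1) (n + 1) t) * b (s - i) (n + i) t
            + a i n t * (b (s - i - 1) (n + i) t - b (s - i - 1) (n + i + 1) t)) := by
  have hreindex :
      ∑ i ∈ Icc (s - N₂) N₁, (a (i - 1) n t - a (i - 1) (n + 1) t) * b (s - i) (n + i) t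
        = ∑ i ∈ Icc (s - 1 - N₂) (N₁ - 1),
            (a i n t * b (s - 1 - i) (n + i + 1) t
              - a i (n + 1) t * b (s - 1 - i) (n + i + 1) t) := by
    refine sum_nbij' (· - 1) (· + 1) (fun i hi => ?_) (fun i hi => ?_) (fun i _ => by ring)
      (fun i _ => by ring) (fun i _ => ?_)
    · rw [mem_Icc] at hi ⊢; omega
    · rw [mem_Icc] at hi ⊢; omega
    · rw [show s - 1 - (i - 1) = s - i by ring, show n + (i - 1) + 1 = n + i by ring]
      ring
  have htele := sum_Icc_sub_eq_of_boundary (L := s - 1 - N₂) (U := N₁)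
      (fun i => a i (n + 1) t * b (s - 1 - i) (n + i + 1) t)
      (fun i => a i n t * b (s - 1 - i) (n + i + 1) t)
      (fun i => a i n t * b (s - 1 - i) (n + i) t)
      (by rw [ha]) (by simp only [show s - 1 - (s - 1 - N₂) = N₂ by ring, hb])
  rw [show s - 1 - N₂ + 1 = s - N₂ by ring] at htele
  calc _ = ∑ i ∈ Icc (s - 1 - N₂) N₁,
          (a i n t * b (s - 1 - i) (n + i) t - a i (n + 1) t * b (s - 1 - i) (n + i + 1) t) := by
        simp only [pdoMulCoeff, ← sum_sub_distrib, add_right_comm n 1]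
    _ = _ := by
        rw [htele, sum_add_distrib, hreindex]
        congr 1
        exact sum_congr rfl fun i _ => by rw [sub_right_comm s 1 i, mul_sub]

theorem bracketCoeff_pdoMulCoeff (u : ℤ → ℂ → ℂ) (hda : ∀ i n, Differentiable ℂ (a i n))
    (hdb : ∀ j n, Differentiable ℂ (b j n)) (ha : ∀ n t, a N₁ (n + 1) t = a N₁ n t)
    (hb : ∀ n t, b N₂ (n + 1) t = b N₂ n t) (s n : ℤ) (t : ℂ) :
    bracketCoeff u (pdoMulCoeff N₁ N₂ a b) s n t
      = ∑ i ∈ Icc (s - N₂) N₁,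
          (bracketCoeff u a i n t * b (s - i) (n + i) t
            + a i n t * bracketCoeff u b (s - i) (n + i) t) := by
  have hmul : u n t * pdoMulCoeff N₁ N₂ a b s n t - pdoMulCoeff N₁ N₂ a b s n t * u (n + s) t
      = ∑ i ∈ Icc (s - N₂) N₁,
          ((u n t * a i n t - a i n t * u (n + i) t) * b (s - i) (n + i) t
            + a i n t * (u (n + i) t * b (s - i) (n + i) t
              - b (s - i) (n + i) t * u (n + i + (s - i)) t)) := by
    simp only [pdoMulCoeff, mul_sum, sum_mul, ← sum_sub_distrib, add_add_sub_cancel]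
    exact sum_congr rfl fun i _ => by ring
  calc _ = deriv (pdoMulCoeff N₁ N₂ a b s n) t
          + (pdoMulCoeff N₁ N₂ a b (s - 1) n t - pdoMulCoeff N₁ N₂ a b (s - 1) (n + 1) t)
          + (u n t * pdoMulCoeff N₁ N₂ a b s n t - pdoMulCoeff N₁ N₂ a b s n t * u (n + s) t) := by
        rw [bracketCoeff]; ring
    _ = _ := by
        rw [deriv_pdoMulCoeff hda hdb, pdoMulCoeff_sub_shift ha hb, hmul, ← sum_add_distrib,
          ← sum_add_distrib]
        exact sum_congr rfl fun i _ => by rw [bracketCoeff, bracketCoeff]; ring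

end Product

theorem differentiable_Lcoeff {w : ℕ → ℤ → ℂ → ℂ} (hw : ∀ i n, Differentiable ℂ (w i n))
    (s n : ℤ) : Differentiable ℂ (Lcoeff w s n) := by
  unfold Lcoeff
  split_ifs
  exacts [differentiable_const _, hw _ n, differentiable_const _]

theorem differentiable_Lpow {w : ℕ → ℤ → ℂ → ℂ} (hw : ∀ i n, Differentiable ℂ (w i n)) :
    ∀ (m : ℕ) (s n : ℤ), Differentiable ℂ (Lpow w m s n)
  | 0, s, n => by unfold Lpow; split_ifs <;> exact differentiable_const _
  | m + 1, s, n => by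
    unfold Lpow pdoMulCoeff
    exact Differentiable.fun_sum fun i _ =>
      (differentiable_Lcoeff hw i n).fun_mul (differentiable_Lpow hw m (s - i) (n + i))

theorem Lpow_self (w : ℕ → ℤ → ℂ → ℂ) : ∀ (m : ℕ) (n : ℤ) (t : ℂ), Lpow w m m n t = 1
  | 0, n, t => by simp [Lpow]
  | m + 1, n, t => by
    rw [Lpow, pdoMulCoeff, Nat.cast_succ, add_sub_cancel_left, Icc_self, sum_singleton,
      add_sub_cancel_right, Lpow_self w m]
    simp [Lcoeff]

theorem bracketCoeff_Lpow_eq_zero {w : ℕ → ℤ → ℂ → ℂ} {u : ℤ → ℂ → ℂ}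
    (hw : ∀ i n, Differentiable ℂ (w i n)) (hLax : ∀ s n t, bracketCoeff u (Lcoeff w) s n t = 0) :
    ∀ (m : ℕ) (s n : ℤ) (t : ℂ), bracketCoeff u (Lpow w m) s n t = 0
  | 0, s, n, t => by
    by_cases hs : s = 0 <;> simp [bracketCoeff, Lpow, hs]
  | m + 1, s, n, t => by
    rw [Lpow, bracketCoeff_pdoMulCoeff u (differentiable_Lcoeff hw) (differentiable_Lpow hw m)
      (fun _ _ => by simp [Lcoeff]) (fun _ _ => by rw [Lpow_self, Lpow_self])]
    exact sum_eq_zero fun i _ => by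
      rw [hLax, bracketCoeff_Lpow_eq_zero hw hLax m, zero_mul, mul_zero, add_zero]

theorem bracketCoeff_posPart (u : ℤ → ℂ → ℂ) (a : ℤ → ℤ → ℂ → ℂ) (s n : ℤ) (t : ℂ) :
    bracketCoeff u (posPart a) s n t
      = posPart (bracketCoeff u a) s n t + if s = 1 then a 0 (n + 1) t - a 0 n t else 0 := by
  have hcoeff : posPart a s n = if 1 ≤ s then a s n else 0 := by
    unfold posPart; split_ifs <;> rfl
  rcases lt_trichotomy s 1 with hs | rfl | hs
  · simp [bracketCoeff, posPart, hcoeff, hs.not_ge, hs.ne, show ¬1 ≤ s - 1 by omega]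
  · simp [bracketCoeff, posPart, hcoeff]
    ring
  · simp [bracketCoeff, posPart, hcoeff, hs.le, hs.ne', show 1 ≤ s - 1 by omega]

theorem stmt10_general (w : ℕ → ℤ → ℂ → ℂ) (u : ℤ → ℂ → ℂ)
    (hw : ∀ (i : ℕ) (n : ℤ), Differentiable ℂ (w i n))
    (hLax : ∀ (s n : ℤ) (t : ℂ), bracketCoeff u (Lcoeff w) s n t = 0) (m : ℕ) :
    (∀ (s n : ℤ) (t : ℂ),
      bracketCoeff u (posPart (Lpow w m)) s n t
        = if s = 1 then Lpow w m 0 (n + 1) t - Lpow w m 0 n t else 0) ∧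
    (∀ (n : ℤ) (t : ℂ),
      Lpow w m (-1) (n + 1) t - Lpow w m (-1) n t = deriv (Lpow w m 0 n) t) ∧
    (∀ (n : ℤ) (t : ℂ),
      Lpow w m (-2) (n + 1) t - Lpow w m (-2) n t
        = deriv (Lpow w m (-1) n) t + u n t * Lpow w m (-1) n t
          - Lpow w m (-1) n t * u (n - 1) t) := by
  have hcomm := bracketCoeff_Lpow_eq_zero hw hLax m
  refine ⟨fun s n t => ?_, fun n t => ?_, fun n t => ?_⟩
  · rw [bracketCoeff_posPart, posPart]
    simp [hcomm]
  · have h0 := hcomm 0 n t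
    simp only [bracketCoeff, zero_sub, add_zero] at h0
    linear_combination -h0
  · have h1 := hcomm (-1) n t
    simp only [bracketCoeff, show (-1 : ℤ) - 1 = -2 by norm_num, ← sub_eq_add_neg] at h1
    linear_combination -h1

/-- equations (3.4)–(3.7) of the paper: if `[∂_t − T + u, L] = 0` for
`L = T + Σ_{s≥0} w_s T^{−s}`, then `[∂_t − T + u, L^m_+] = (Δ F_m)·T` where
`F_m = res_T L^m` is the `T^0`-coefficient of `L^m`; moreover `Δ F_m^1 = ∂_t F_m` and
`Δ F_m^2 = ∂_t F_m^1 + u·F_m^1 − F_m^1·u(·−1)`, where `F_m^1`, `F_m^2` are the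
`T^{−1}`- and `T^{−2}`-coefficients of `L^m`. -/
theorem stmt10 (w : ℕ → ℤ → ℂ → ℂ) (u : ℤ → ℂ → ℂ)
    (hw : ∀ (i : ℕ) (n : ℤ), Differentiable ℂ (w i n))
    (hu : ∀ n : ℤ, Differentiable ℂ (u n))
    (hLax : ∀ (s n : ℤ) (t : ℂ), bracketCoeff u (Lcoeff w) s n t = 0) (m : ℕ) :
    (∀ (s n : ℤ) (t : ℂ),
      bracketCoeff u (posPart (Lpow w m)) s n t
        = if s = 1 then Lpow w m 0 (n + 1) t - Lpow w m 0 n t else 0) ∧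
    (∀ (n : ℤ) (t : ℂ),
      Lpow w m (-1) (n + 1) t - Lpow w m (-1) n t = deriv (Lpow w m 0 n) t) ∧
    (∀ (n : ℤ) (t : ℂ),
      Lpow w m (-2) (n + 1) t - Lpow w m (-2) n t
        = deriv (Lpow w m (-1) n) t + u n t * Lpow w m (-1) n t
          - Lpow w m (-1) n t * u (n - 1) t) :=
  stmt10_general w u hw hLax m

end Stmt10
end
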